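/- If Γ is a finite vertex-transitive graph that is neither null nor complete and satisfies ω(Γ) = χ(Γ), then χ(Γ) = |V(Γ)|/α(Γ), and the colour classes of any minimum proper vertex-colouring of Γ form a partition of V(Γ) into exactly ω(Γ) independent sets, each of size α(Γ). -/

import Mathlib

open SimpleGraph

/-- The independence number of a graph: the clique number of its complement. -/
noncomputable def SimpleGraph.indepNum' {V : Type*} (G : SimpleGraph V) : ℕ :=
  Gᶜ.cliqueNum

/-- A graph is vertex-transitive if its automorphism group is transitive on vertices. -/
def SimpleGraph.IsVertexTransitive {V : Type*} (G : SimpleGraph V) : Prop :=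
  ∀ u v : V, ∃ φ : G ≃g G, φ u = v

/-! An automorphism maps a maximum clique onto a clique, which meets a maximum independent set in
at most one vertex. Since the automorphism group is transitive, a random automorphism sends a fixed
vertex to a uniformly distributed one, so the expected size of that intersection is `ω α / |V|`;
hence `ω α ≤ |V|`. Conversely an `ω`-colouring splits `V` into `ω` independent sets of size at
most `α`, so `|V| ≤ ω α`, and equality forces every colour class to have exactly `α` vertices. -/

open Finset
open scoped Pointwise

namespace MulAction

variable {H α : Type*} [Group H] [MulAction H α]

theorem card_smul_eq_mul_card_eq_card_group [IsPretransitive H α] (x y : α) :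
    Nat.card {g : H // g • x = y} * Nat.card α = Nat.card H := by
  obtain ⟨h, rfl⟩ := exists_smul_eq H x y
  have : {g : H // g • x = h • x} ≃ stabilizer H x :=
    { toFun g := ⟨h⁻¹ * g, by simp [mul_smul, g.2]⟩
      invFun g := ⟨h * g, by simp [mul_smul, (mem_stabilizer_iff.mp g.2)]⟩
      left_inv g := by simp
      right_inv g := by simp }
  rw [Nat.card_congr this, ← index_stabilizer_of_transitive H x, Subgroup.card_mul_index]

theorem card_filter_smul_eq_card_inter [DecidableEq α] (g : H) (K A : Finset α) :
    #{p ∈ K ×ˢ A | g • p.1 = p.2} = #(g • K ∩ A) := by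
  refine card_nbij' Prod.snd (fun a => (g⁻¹ • a, a)) ?_ ?_ ?_ ?_
  · rintro ⟨k, a⟩ hp
    simp only [coe_filter, mem_product, Set.mem_ofPred_eq] at hp
    obtain ⟨⟨hk, ha⟩, rfl⟩ := hp
    simp [hk, ha]
  · intro a ha
    simp only [coe_inter, Set.mem_inter_iff, mem_coe, mem_smul_finset] at ha
    obtain ⟨⟨k, hk, rfl⟩, ha⟩ := ha
    simp [hk, ha]
  · rintro ⟨k, a⟩ hp
    simp only [coe_filter, mem_product, Set.mem_ofPred_eq] at hp
    obtain ⟨_, rfl⟩ := hp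
    simp
  · intro a _
    simp

theorem card_mul_card_le_of_card_smul_inter_le_one [Finite H] [IsPretransitive H α] [Fintype α]
    [DecidableEq α] (K A : Finset α) (hKA : ∀ g : H, #(g • K ∩ A) ≤ 1) :
    #K * #A ≤ Fintype.card α := by
  have := Fintype.ofFinite H
  have hfiber (p : α × α) : #{g : H | g • p.1 = p.2} * Fintype.card α = Fintype.card H := by
    rw [← Fintype.card_subtype]
    simp only [← Nat.card_eq_fintype_card]
    exact card_smul_eq_mul_card_eq_card_group p.1 p.2
  have hcount : ∑ p ∈ K ×ˢ A, #{g : H | g • p.1 = p.2} ≤ Fintype.card H :=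
    calc ∑ p ∈ K ×ˢ A, #{g : H | g • p.1 = p.2}
        = ∑ g : H, #{p ∈ K ×ˢ A | g • p.1 = p.2} := by
          simp only [card_filter]; exact sum_comm
      _ ≤ ∑ _g : H, 1 :=
          sum_le_sum fun g _ => (card_filter_smul_eq_card_inter g K A).trans_le (hKA g)
      _ = Fintype.card H := by simp
  refine Nat.le_of_mul_le_mul_right ?_ (Fintype.card_pos (α := H))
  calc #K * #A * Fintype.card H
        = (∑ p ∈ K ×ˢ A, #{g : H | g • p.1 = p.2}) * Fintype.card α := by
        rw [sum_mul, sum_congr rfl fun p _ => hfiber p, sum_const, card_product, smul_eq_mul]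
    _ ≤ Fintype.card H * Fintype.card α := Nat.mul_le_mul_right _ hcount
    _ = Fintype.card α * Fintype.card H := mul_comm _ _

end MulAction

namespace SimpleGraph

variable {V : Type*} {G : SimpleGraph V}

theorem indepNum'_eq_indepNum : G.indepNum' = G.indepNum := cliqueNum_compl

instance [Finite V] : Finite (G ≃g G) := Finite.of_injective _ DFunLike.coe_injective

theorem IsVertexTransitive.isPretransitive (hG : G.IsVertexTransitive) :
    MulAction.IsPretransitive (G ≃g G) V :=
  ⟨hG⟩

theorem IsClique.smul {s : Set V} (hs : G.IsClique s) (φ : G ≃g G) : G.IsClique (φ • s) := by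
  rintro _ ⟨x, hx, rfl⟩ _ ⟨y, hy, rfl⟩ hxy
  exact φ.map_adj_iff.mpr (hs hx hy fun h => hxy (congrArg _ h))

theorem IsClique.card_inter_le_one [DecidableEq V] {K A : Finset V} (hK : G.IsClique (K : Set V))
    (hA : G.IsIndepSet (A : Set V)) : #(K ∩ A) ≤ 1 :=
  card_le_one.2 fun _ hx _ hy => by_contra fun hxy =>
    hA (mem_inter.1 hx).2 (mem_inter.1 hy).2 hxy (hK (mem_inter.1 hx).1 (mem_inter.1 hy).1 hxy)

theorem IsVertexTransitive.card_mul_card_le [Fintype V] (hG : G.IsVertexTransitive)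
    {K A : Finset V} (hK : G.IsClique (K : Set V)) (hA : G.IsIndepSet (A : Set V)) :
    #K * #A ≤ Fintype.card V := by
  classical
  have := hG.isPretransitive
  refine MulAction.card_mul_card_le_of_card_smul_inter_le_one (H := G ≃g G) K A fun φ => ?_
  exact IsClique.card_inter_le_one (by simpa using hK.smul φ) hA

theorem IsVertexTransitive.cliqueNum_mul_indepNum_le [Fintype V] (hG : G.IsVertexTransitive) :
    G.cliqueNum * G.indepNum ≤ Fintype.card V := by
  obtain ⟨K, hK⟩ := G.exists_isNClique_cliqueNum
  obtain ⟨A, hA⟩ := G.exists_isNIndepSet_indepNum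
  simpa [hK.card_eq, hA.card_eq] using hG.card_mul_card_le hK.isClique hA.isIndepSet

theorem Coloring.ncard_colorClass_le_indepNum [Finite V] {α : Type*} (C : G.Coloring α) (c : α) :
    (C.colorClass c).ncard ≤ G.indepNum := by
  have := Fintype.ofFinite V
  classical
  rw [Set.ncard_eq_toFinset_card']
  exact IsIndepSet.card_le_indepNum (by simpa using C.isIndepSet_colorClass c)

theorem Coloring.sum_ncard_colorClass [Fintype V] {α : Type*} [Fintype α] (C : G.Coloring α) :
    ∑ c, (C.colorClass c).ncard = Fintype.card V := by
  classical
  simp only [Set.ncard_eq_toFinset_card', Coloring.colorClass, Set.toFinset_ofPred]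
  exact (card_eq_sum_card_fiberwise fun v _ => mem_univ (C v)).symm

theorem Colorable.card_le_mul_indepNum [Fintype V] {n : ℕ} (hG : G.Colorable n) :
    Fintype.card V ≤ n * G.indepNum := by
  obtain ⟨C⟩ := hG
  calc Fintype.card V = ∑ i, (C.colorClass i).ncard := C.sum_ncard_colorClass.symm
    _ ≤ ∑ _i : Fin n, G.indepNum := sum_le_sum fun i _ => C.ncard_colorClass_le_indepNum i
    _ = n * G.indepNum := by simp

theorem Coloring.ncard_colorClass_eq_indepNum [Fintype V] {α : Type*} [Fintype α]
    (C : G.Coloring α) (hcard : Fintype.card α * G.indepNum = Fintype.card V) (c : α) :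
    (C.colorClass c).ncard = G.indepNum := by
  have hsum : ∑ c, (C.colorClass c).ncard = ∑ _c : α, G.indepNum := by
    simp [C.sum_ncard_colorClass, hcard]
  exact (sum_eq_sum_iff_of_le fun c _ => C.ncard_colorClass_le_indepNum c).1 hsum c (mem_univ c)

theorem cliqueNum_eq_card_div_indepNum [Fintype V]
    (hcard : G.cliqueNum * G.indepNum = Fintype.card V) :
    G.cliqueNum = Fintype.card V / G.indepNum := by
  rcases isEmpty_or_nonempty V with hV | ⟨⟨v⟩⟩
  · obtain ⟨K, hK⟩ := G.exists_isNClique_cliqueNum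
    simp [← hK.card_eq, eq_empty_of_isEmpty K]
  · have hα : 0 < G.indepNum :=
      (IsIndepSet.card_le_indepNum (t := {v}) (by simp)).trans_lt' (by simp)
    exact Nat.eq_div_of_mul_eq_left hα.ne' hcard

end SimpleGraph

theorem stmt_1_general {V : Type*} [Fintype V] (G : SimpleGraph V)
    (hvt : G.IsVertexTransitive)
    (hωχ : (G.cliqueNum : ℕ∞) = G.chromaticNumber) :
    G.chromaticNumber = ((Fintype.card V / G.indepNum' : ℕ) : ℕ∞) ∧
      ∀ (C : G.Coloring (Fin G.cliqueNum)) (i : Fin G.cliqueNum),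
        (C.colorClass i).ncard = G.indepNum' := by
  have hcol : G.Colorable G.cliqueNum := chromaticNumber_le_iff_colorable.mp hωχ.ge
  have hcard : G.cliqueNum * G.indepNum = Fintype.card V :=
    hvt.cliqueNum_mul_indepNum_le.antisymm hcol.card_le_mul_indepNum
  rw [indepNum'_eq_indepNum]
  refine ⟨?_, fun C => C.ncard_colorClass_eq_indepNum (by simpa using hcard)⟩
  rw [← hωχ, ← cliqueNum_eq_card_div_indepNum hcard]

/-- If a finite vertex-transitive graph is neither null nor complete and its clique
number equals its chromatic number, then the chromatic number is `|V|/α`, and every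
minimum proper colouring (i.e. one with `ω` colours) has all colour classes of size `α`
(so the colour classes partition the vertices into `ω` independent sets of size `α`). -/
theorem stmt_1 {V : Type*} [Fintype V] (G : SimpleGraph V)
    (hvt : G.IsVertexTransitive) (hnn : G ≠ ⊥) (hnc : G ≠ ⊤)
    (hωχ : (G.cliqueNum : ℕ∞) = G.chromaticNumber) :
    G.chromaticNumber = ((Fintype.card V / G.indepNum' : ℕ) : ℕ∞) ∧
      ∀ (C : G.Coloring (Fin G.cliqueNum)) (i : Fin G.cliqueNum),
        (C.colorClass i).ncard = G.indepNum' :=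
  stmt_1_general G hvt hωχ
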